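/- For positive semidefinite matrices X ≤ Y on ℂ^n and s ∈ [0,1], one has X^s ≤ Y^s (operator monotonicity of the power function x ↦ x^s on [0,1]). -/

import Mathlib

open scoped ComplexOrder

/-- Functional calculus for Hermitian matrices (junk value `0` off the Hermitian matrices). -/
noncomputable def cfcM {d : ℕ} (f : ℝ → ℝ) (A : Matrix (Fin d) (Fin d) ℂ) :
    Matrix (Fin d) (Fin d) ℂ :=
  if h : A.IsHermitian then
    (h.eigenvectorUnitary : Matrix (Fin d) (Fin d) ℂ) *
      Matrix.diagonal (fun i => (f (h.eigenvalues i) : ℂ)) *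
      (star (h.eigenvectorUnitary : Matrix (Fin d) (Fin d) ℂ))
  else 0

/-- Real power of a (positive) Hermitian matrix via functional calculus. -/
noncomputable def mpow {d : ℕ} (A : Matrix (Fin d) (Fin d) ℂ) (s : ℝ) :
    Matrix (Fin d) (Fin d) ℂ := cfcM (fun x => x ^ s) A

/-!
`cfcM` is the continuous functional calculus of the C⋆-algebra of matrices (with the `L²`
operator norm and the Loewner order) written out through the spectral theorem, so on positive
semidefinite matrices `mpow` is `CFC.rpow`, and the theorem is an instance of `CFC.rpow_le_rpow`:
in any C⋆-algebra `x ↦ x ^ s` is operator monotone for `s ∈ [0, 1]`, by the integral representation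
`x ^ s = c ∫₀^∞ t ^ (s - 1) x (t + x)⁻¹ dt` whose integrands are operator monotone.
-/

open scoped MatrixOrder Matrix.Norms.L2Operator

theorem cfcM_eq_cfc {d : ℕ} (f : ℝ → ℝ) {A : Matrix (Fin d) (Fin d) ℂ} (hA : A.IsHermitian) :
    cfcM f A = cfc f A := by
  rw [hA.cfc_eq, Matrix.IsHermitian.cfc, cfcM, dif_pos hA, Unitary.conjStarAlgAut_apply]
  rfl

theorem mpow_eq_rpow {d : ℕ} {A : Matrix (Fin d) (Fin d) ℂ} (hA : A.PosSemidef) (s : ℝ) :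
    mpow A s = A ^ s := by
  rw [mpow, cfcM_eq_cfc _ hA.isHermitian, CFC.rpow_eq_cfc_real hA.nonneg]

theorem mpow_le_mpow_of_posSemidef_le_general {n : ℕ}
    (X Y : Matrix (Fin n) (Fin n) ℂ) (hX : X.PosSemidef)
    (hXY : (Y - X).PosSemidef) (s : ℝ) (hs : s ∈ Set.Icc (0 : ℝ) 1) :
    (mpow Y s - mpow X s).PosSemidef := by
  have hle : X ≤ Y := Matrix.le_iff.mpr hXY
  have hY : Y.PosSemidef := Matrix.nonneg_iff_posSemidef.mp (hX.nonneg.trans hle)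
  rw [mpow_eq_rpow hX, mpow_eq_rpow hY, ← Matrix.le_iff]
  exact CFC.rpow_le_rpow hs hle

/-- Operator monotonicity of `x ↦ x^s`, `s ∈ [0,1]`, on positive semidefinite matrices:
if `X ≤ Y` (i.e. `Y − X` is positive semidefinite) then `X^s ≤ Y^s`. -/
theorem mpow_le_mpow_of_posSemidef_le {n : ℕ}
    (X Y : Matrix (Fin n) (Fin n) ℂ) (hX : X.PosSemidef) (hY : Y.PosSemidef)
    (hXY : (Y - X).PosSemidef) (s : ℝ) (hs : s ∈ Set.Icc (0 : ℝ) 1) :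
    (mpow Y s - mpow X s).PosSemidef :=
  mpow_le_mpow_of_posSemidef_le_general X Y hX hXY s hs
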